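/- Chain rule for Boolean-to-integer-to-numeric composition: let f: B → ℤ and g: ℤ → ℤ with g'(n) := g(n+1) − g(n). If x in B satisfies |f'(x)| ≤ 1 and g'(f(x)) = g'(f(x) − 1), then (g ∘ f)'(x) = xnor(g'(f(x)), f'(x)). -/
import Mathlib


inductive Bv : Type | T | F
deriving DecidableEq

inductive Tv : Type | T | Z | F
deriving DecidableEq

def Bv.neg : Bv → Bv | .T => .F | .F => .T

def Bv.toTv : Bv → Tv | .T => .T | .F => .F

def eB : Bv → ℤ | .T => 1 | .F => -1

def Tv.neg : Tv → Tv | .T => .F | .F => .T | .Z => .Z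

def eT : Tv → ℤ | .T => 1 | .Z => 0 | .F => -1

def Tv.xnor : Tv → Tv → Tv
  | .Z, _ => .Z
  | _, .Z => .Z
  | .T, .T => .T
  | .F, .F => .T
  | .T, .F => .F
  | .F, .T => .F

def Bv.xnor : Bv → Bv → Bv
  | .T, .T => .T
  | .F, .F => .T
  | _, _ => .F

def Bv.xor : Bv → Bv → Bv
  | .T, .T => .F
  | .F, .F => .F
  | _, _ => .T

def pInt (x : ℤ) : Tv := if x > 0 then .T else if x = 0 then .Z else .F

def delta (a b : Bv) : Tv := if a = b then .Z else if b = Bv.T then .T else .F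

def derivB (f : Bv → Bv) (x : Bv) : Tv :=
  Tv.xnor (delta x x.neg) (delta (f x) (f x.neg))

def mxnor (a : Tv) (n : ℤ) : ℤ := eT a * n

def derivZ (f : Bv → ℤ) (x : Bv) : ℤ := mxnor (delta x x.neg) (f x.neg - f x)

def dInt (g : ℤ → ℤ) (n : ℤ) : ℤ := g (n + 1) - g n

theorem chain_rule_int (f : Bv → ℤ) (g : ℤ → ℤ) (x : Bv)
    (h1 : |derivZ f x| ≤ 1) (h2 : dInt g (f x) = dInt g (f x - 1)) :
    derivZ (fun z => g (f z)) x = dInt g (f x) * derivZ f x := by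
  cases x <;>
  · simp only [derivZ, dInt, mxnor, delta, Bv.neg, eT] at *
    simp only [reduceCtorEq, if_false, if_true] at *
    rcases abs_le.mp h1 with ⟨hl, hr⟩
    generalize hT : f Bv.T = a at *
    generalize hF : f Bv.F = b at *
    have : b = a - 1 ∨ b = a ∨ b = a + 1 := by omega
    rcases this with h | h | h <;> subst h <;> ring_nf at * <;> linarith
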